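/- Let (X, μ) be a probability space, G a countable group acting measurably on X such that μ is quasi-invariant (for each g ∈ G, the pushforward of μ under x ↦ g·x is equivalent to μ), and H a real separable Hilbert space. Let Ψ : G × X → (linear isometric equivalences of H) and ρ : G × X → H be measurable maps satisfying, for all g, h ∈ G and μ-almost every x ∈ X, the cocycle relations Ψ(gh,x) = Ψ(g,h·x) ∘ Ψ(h,x) and ρ(gh,x) = ρ(g,h·x) + Ψ(g,h·x)(ρ(h,x)). Suppose the induced affine isometric action on essentially bounded functions has a bounded orbit: there exist a measurable essentially bounded φ₀ : X → H and a constant C ≥ 0 such that for every g ∈ G, ‖Ψ(g,x)(φ₀(x)) + ρ(g,x)‖ ≤ C for μ-almost every x. Then there is a fixed point: there exists a measurable essentially bounded φ : X → H such that for every g ∈ G, φ(g·x) = Ψ(g,x)(φ(x)) + ρ(g,x) for μ-almost every x ∈ X. -/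

import Mathlib

/-!
For almost every `x`, the values `(g • φ₀) x` of the orbit of `φ₀` form a bounded subset of
`H`, and the cocycle identities say that the set at `h • x` is the image of the set at `x` under
the affine isometry `v ↦ Ψ h x v + ρ h x`. By the parallelogram law a bounded subset of a Hilbert
space has a unique Chebyshev center (the point minimizing the largest distance to the set), so
the center is carried along by isometries and `x ↦` (center of the orbit values at `x`) is a fixed
point. It is measurable because it is a limit of approximate minimizers drawn from a countable
dense set.
-/

open MeasureTheory Filter Topology Set Bornology TopologicalSpace

section PseudoMetric

variable {ι κ E : Type*} [PseudoMetricSpace E] {s : ι → E}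

-- Junk value `0` when `s` is unbounded, hence the boundedness hypotheses below.
noncomputable def supDist (s : ι → E) (v : E) : ℝ := ⨆ i, dist v (s i)

theorem supDist_nonneg (s : ι → E) (v : E) : 0 ≤ supDist s v :=
  Real.iSup_nonneg fun _ => dist_nonneg

theorem dist_le_supDist (hs : IsBounded (range s)) (v : E) (i : ι) :
    dist v (s i) ≤ supDist s v := by
  obtain ⟨R, hR⟩ := (Metric.isBounded_iff_subset_closedBall v).1 hs
  refine le_ciSup (f := fun j => dist v (s j)) ⟨R, forall_mem_range.2 fun j => ?_⟩ i
  rw [dist_comm]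
  exact hR (mem_range_self j)

theorem supDist_le {v : E} {a : ℝ} (h : ∀ i, dist v (s i) ≤ a) (ha : 0 ≤ a) :
    supDist s v ≤ a :=
  Real.iSup_le h ha

theorem supDist_le_supDist_add_dist (hs : IsBounded (range s)) (u v : E) :
    supDist s u ≤ supDist s v + dist u v :=
  supDist_le (fun i => (dist_triangle u v (s i)).trans (by linarith [dist_le_supDist hs v i]))
    (add_nonneg (supDist_nonneg s v) dist_nonneg)

theorem continuous_supDist (hs : IsBounded (range s)) : Continuous (supDist s) :=
  (LipschitzWith.of_le_add (supDist_le_supDist_add_dist hs)).continuous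

theorem supDist_of_range_eq_image {t : κ → E} {e : E → E} (he : Isometry e)
    (hts : range t = e '' range s) (v : E) : supDist t (e v) = supDist s v := by
  have hrange : range (fun i => dist (e v) (t i)) = range (fun i => dist v (s i)) :=
    calc range (dist (e v) ∘ t) = dist (e v) '' range t := range_comp _ _
      _ = dist v '' range s := by simp only [hts, image_image, he.dist_eq]
      _ = range (dist v ∘ s) := (range_comp _ _).symm
  simp only [supDist, iSup, hrange]

noncomputable def chebyshevRadius (s : ι → E) : ℝ := ⨅ v, supDist s v

theorem chebyshevRadius_nonneg (s : ι → E) : 0 ≤ chebyshevRadius s :=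
  Real.iInf_nonneg fun _ => supDist_nonneg s _

theorem chebyshevRadius_le_supDist (s : ι → E) (v : E) : chebyshevRadius s ≤ supDist s v :=
  ciInf_le ⟨0, forall_mem_range.2 fun _ => supDist_nonneg s _⟩ v

variable [SeparableSpace E] [Nonempty E]

theorem iInf_supDist_denseSeq (hs : IsBounded (range s)) :
    ⨅ m, supDist s (denseSeq E m) = chebyshevRadius s := by
  refine le_antisymm (le_ciInf fun v => le_of_forall_pos_le_add fun ε hε => ?_)
    (le_ciInf fun m => chebyshevRadius_le_supDist s _)
  obtain ⟨m, hm⟩ := (denseRange_denseSeq E).exists_dist_lt v hε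
  calc ⨅ m, supDist s (denseSeq E m) ≤ supDist s (denseSeq E m) :=
        ciInf_le ⟨0, forall_mem_range.2 fun _ => supDist_nonneg s _⟩ m
    _ ≤ supDist s v + dist (denseSeq E m) v := supDist_le_supDist_add_dist hs _ _
    _ ≤ supDist s v + ε := by rw [dist_comm]; exact add_le_add_right hm.le _

theorem exists_supDist_denseSeq_lt (s : ι → E) (k : ℕ) :
    ∃ m, supDist s (denseSeq E m) < (⨅ m, supDist s (denseSeq E m)) + 1 / (k + 1) :=
  exists_lt_of_ciInf_lt (lt_add_of_pos_right _ Nat.one_div_pos_of_nat)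

/-- Minimizing over a fixed dense sequence rather than over `E` makes `approxCenter s k` defined
for every `s` and measurable in `s`. -/
noncomputable def approxCenter (s : ι → E) (k : ℕ) : E :=
  open Classical in denseSeq E (Nat.find (exists_supDist_denseSeq_lt s k))

theorem supDist_approxCenter_lt (hs : IsBounded (range s)) (k : ℕ) :
    supDist s (approxCenter s k) < chebyshevRadius s + 1 / (k + 1) := by
  classical
  rw [← iInf_supDist_denseSeq hs]
  exact Nat.find_spec (exists_supDist_denseSeq_lt s k)

theorem tendsto_supDist_approxCenter (hs : IsBounded (range s)) :
    Tendsto (fun k => supDist s (approxCenter s k)) atTop (𝓝 (chebyshevRadius s)) :=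
  tendsto_of_tendsto_of_tendsto_of_le_of_le tendsto_const_nhds
    (by simpa using tendsto_one_div_add_atTop_nhds_zero_nat.const_add (chebyshevRadius s))
    (fun _ => chebyshevRadius_le_supDist s _) (fun k => (supDist_approxCenter_lt hs k).le)

noncomputable def chebyshevCenter (s : ι → E) : E :=
  limUnder atTop (approxCenter s)

end PseudoMetric

section InnerProduct

variable {ι κ E : Type*} [NormedAddCommGroup E] [InnerProductSpace ℝ E] {s : ι → E}

theorem sq_supDist_midpoint_le [Nonempty ι] (hs : IsBounded (range s)) (u v : E) :
    supDist s (midpoint ℝ u v) ^ 2 ≤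
      (supDist s u ^ 2 + supDist s v ^ 2) / 2 - (dist u v / 2) ^ 2 := by
  set B := (supDist s u ^ 2 + supDist s v ^ 2) / 2 - (dist u v / 2) ^ 2 with hB_def
  have hB : ∀ i, dist (midpoint ℝ u v) (s i) ^ 2 ≤ B := fun i => by
    have := EuclideanGeometry.dist_sq_add_dist_sq_eq_two_mul_dist_midpoint_sq_add_half_dist_sq
      (s i) u v
    rw [dist_comm (s i), dist_comm (s i), dist_comm (s i)] at this
    have hu := pow_le_pow_left₀ dist_nonneg (dist_le_supDist hs u i) 2
    have hv := pow_le_pow_left₀ dist_nonneg (dist_le_supDist hs v i) 2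
    linarith [hB_def]
  have hB0 : 0 ≤ B := (sq_nonneg _).trans (hB (Classical.arbitrary ι))
  rw [← Real.le_sqrt (supDist_nonneg s _) hB0]
  exact supDist_le (fun i => Real.le_sqrt_of_sq_le (hB i)) (Real.sqrt_nonneg B)

theorem dist_sq_le_of_le_supDist [Nonempty ι] (hs : IsBounded (range s)) {r : ℝ} (hr : 0 ≤ r)
    (hr_le : ∀ w, r ≤ supDist s w) (u v : E) :
    dist u v ^ 2 ≤ 2 * (supDist s u ^ 2 + supDist s v ^ 2) - 4 * r ^ 2 := by
  have hmid := sq_supDist_midpoint_le hs u v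
  have hr_mid := pow_le_pow_left₀ hr (hr_le (midpoint ℝ u v)) 2
  linarith

theorem eq_of_forall_supDist_le [Nonempty ι] (hs : IsBounded (range s)) {c c' : E}
    (hc : ∀ v, supDist s c ≤ supDist s v) (hc' : ∀ v, supDist s c' ≤ supDist s v) :
    c = c' := by
  have hsq := dist_sq_le_of_le_supDist hs (supDist_nonneg s c) hc c c'
  rw [le_antisymm (hc c') (hc' c)] at hsq
  exact dist_le_zero.1 (by nlinarith [dist_nonneg (x := c) (y := c')])

theorem cauchySeq_of_tendsto_supDist [Nonempty ι] (hs : IsBounded (range s)) {r : ℝ}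
    (hr : 0 ≤ r) (hr_le : ∀ v, r ≤ supDist s v) {w : ℕ → E}
    (hw : Tendsto (fun k => supDist s (w k)) atTop (𝓝 r)) : CauchySeq w := by
  refine Metric.cauchySeq_iff'.2 fun ε hε => ?_
  obtain ⟨N, hN⟩ := eventually_atTop.1 <| (hw.pow 2).eventually <|
    eventually_lt_nhds (lt_add_of_pos_right (r ^ 2) (by positivity : 0 < ε ^ 2 / 4))
  refine ⟨N, fun n hn => ?_⟩
  have hsq := dist_sq_le_of_le_supDist hs hr hr_le (w n) (w N)
  have hn := hN n hn
  have hN := hN N le_rfl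
  exact (pow_lt_pow_iff_left₀ dist_nonneg hε.le two_ne_zero).1 (by linarith)

variable [SeparableSpace E] [CompleteSpace E] [Nonempty ι]

theorem tendsto_approxCenter (hs : IsBounded (range s)) :
    Tendsto (approxCenter s) atTop (𝓝 (chebyshevCenter s)) :=
  tendsto_nhds_limUnder <| cauchySeq_tendsto_of_complete <|
    cauchySeq_of_tendsto_supDist hs (chebyshevRadius_nonneg s) (chebyshevRadius_le_supDist s)
      (tendsto_supDist_approxCenter hs)

theorem supDist_chebyshevCenter (hs : IsBounded (range s)) :
    supDist s (chebyshevCenter s) = chebyshevRadius s :=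
  tendsto_nhds_unique (((continuous_supDist hs).tendsto _).comp (tendsto_approxCenter hs))
    (tendsto_supDist_approxCenter hs)

theorem supDist_chebyshevCenter_le (hs : IsBounded (range s)) (v : E) :
    supDist s (chebyshevCenter s) ≤ supDist s v :=
  (supDist_chebyshevCenter hs).trans_le (chebyshevRadius_le_supDist s v)

theorem chebyshevCenter_of_range_eq_image {t : κ → E} [Nonempty κ] (e : E ≃ᵢ E)
    (hs : IsBounded (range s)) (hts : range t = e '' range s) :
    chebyshevCenter t = e (chebyshevCenter s) := by
  have ht : IsBounded (range t) := hts ▸ e.isometry.lipschitz.isBounded_image hs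
  refine eq_of_forall_supDist_le ht (supDist_chebyshevCenter_le ht) fun v => ?_
  rw [supDist_of_range_eq_image e.isometry hts, ← e.apply_symm_apply v,
    supDist_of_range_eq_image e.isometry hts]
  exact supDist_chebyshevCenter_le hs _

theorem norm_chebyshevCenter_le {C : ℝ} (hs : ∀ i, ‖s i‖ ≤ C) :
    ‖chebyshevCenter s‖ ≤ 2 * C := by
  have hb : IsBounded (range s) := isBounded_iff_forall_norm_le.2 ⟨C, forall_mem_range.2 hs⟩
  obtain ⟨i⟩ := ‹Nonempty ι›
  have hC : 0 ≤ C := (norm_nonneg _).trans (hs i)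
  calc ‖chebyshevCenter s‖ ≤ ‖s i‖ + dist (chebyshevCenter s) (s i) := by
        rw [dist_eq_norm]; exact norm_le_insert' _ _
    _ ≤ C + supDist s 0 := add_le_add (hs i) ((dist_le_supDist hb _ i).trans
        (supDist_chebyshevCenter_le hb 0))
    _ ≤ C + C := add_le_add_right (supDist_le (fun j => by simpa using hs j) hC) C
    _ = 2 * C := by ring

end InnerProduct

section Measurable

variable {ι E X : Type*} [MetricSpace E] [SeparableSpace E] [MeasurableSpace E] [BorelSpace E]
  [Countable ι] [MeasurableSpace X] {f : ι → X → E}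

theorem measurable_supDist (hf : ∀ i, Measurable (f i)) (v : E) :
    Measurable fun x => supDist (fun i => f i x) v :=
  Measurable.iSup fun i => measurable_const.dist (hf i)

theorem measurable_approxCenter [Nonempty E] (hf : ∀ i, Measurable (f i)) (k : ℕ) :
    Measurable fun x => approxCenter (fun i => f i x) k := by
  classical
  exact Measurable.find (f := fun m _ => denseSeq E m) (fun _ => measurable_const)
      (fun _ => measurableSet_lt (measurable_supDist hf _)
        ((Measurable.iInf fun _ => measurable_supDist hf _).add_const _)) _

theorem measurable_chebyshevCenter [Nonempty E] [CompleteSpace E]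
    (hf : ∀ i, Measurable (f i)) :
    Measurable fun x => chebyshevCenter fun i => f i x :=
  (StronglyMeasurable.limUnder fun k =>
    (measurable_approxCenter hf k).stronglyMeasurable).measurable

end Measurable

section AffineAction

variable {X G H : Type*} [MeasurableSpace X] [Group G] [NormedAddCommGroup H]
  [InnerProductSpace ℝ H]

-- Its fixed points are the `φ` with `φ (act g x) = Ψ g x (φ x) + ρ g x`.
def affineAction (act : G → X → X) (Ψ : G → X → (H ≃ₗᵢ[ℝ] H)) (ρ : G → X → H) (g : G)
    (φ : X → H) (x : X) : H :=
  Ψ g (act g⁻¹ x) (φ (act g⁻¹ x)) + ρ g (act g⁻¹ x)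

variable {act : G → X → X} {Ψ : G → X → (H ≃ₗᵢ[ℝ] H)} {ρ : G → X → H}

theorem measurable_affineAction [MeasurableSpace H] [BorelSpace H] [SeparableSpace H]
    (hact : ∀ g, Measurable (act g)) (hΨ : ∀ g v, Measurable fun x => Ψ g x v)
    (hρ : ∀ g, Measurable (ρ g)) {φ : X → H} (hφ : Measurable φ) (g : G) :
    Measurable (affineAction act Ψ ρ g φ) := by
  have hΨφ : Measurable fun x => Ψ g x (φ x) :=
    (measurable_uncurry_of_continuous_of_measurable (u := fun v x => Ψ g x v)
      (fun x => (Ψ g x).continuous) (hΨ g)).comp (hφ.prodMk measurable_id)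
  exact (hΨφ.add (hρ g)).comp (hact g⁻¹)

theorem ae_affineAction_mul_apply {μ : Measure X} (hact_one : ∀ x, act 1 x = x)
    (hact_mul : ∀ g h x, act (g * h) x = act g (act h x)) {g h : G}
    (hqmp : Measure.QuasiMeasurePreserving (act g⁻¹) μ μ)
    (hΨ : ∀ᵐ y ∂μ, ∀ v, Ψ (h * g) y v = Ψ h (act g y) (Ψ g y v))
    (hρ : ∀ᵐ y ∂μ, ρ (h * g) y = ρ h (act g y) + Ψ h (act g y) (ρ g y)) (φ : X → H) :
    ∀ᵐ x ∂μ, affineAction act Ψ ρ (h * g) φ (act h x) =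
      Ψ h x (affineAction act Ψ ρ g φ x) + ρ h x := by
  have hact_inv : ∀ x, act g (act g⁻¹ x) = x := fun x => by
    rw [← hact_mul, mul_inv_cancel, hact_one]
  have hact_mul_inv : ∀ x, act (h * g)⁻¹ (act h x) = act g⁻¹ x := fun x => by
    rw [mul_inv_rev, hact_mul, ← hact_mul h⁻¹, inv_mul_cancel, hact_one]
  filter_upwards [hqmp.ae hΨ, hqmp.ae hρ] with x hΨx hρx
  rw [hact_inv] at hΨx hρx
  simp only [affineAction, hact_mul_inv, hΨx, hρx, map_add]
  abel

end AffineAction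

theorem bounded_orbit_on_Linfty_has_fixed_point_general
    {X : Type*} [MeasurableSpace X] (μ : Measure X)
    {G : Type*} [Group G] [Countable G]
    {H : Type*} [NormedAddCommGroup H] [InnerProductSpace ℝ H] [CompleteSpace H]
    [TopologicalSpace.SeparableSpace H] [MeasurableSpace H] [BorelSpace H]
    (act : G → X → X)
    (hact_one : ∀ x, act 1 x = x)
    (hact_mul : ∀ g h x, act (g * h) x = act g (act h x))
    (hact_meas : ∀ g, Measurable (act g))
    (hquasi : ∀ g, μ.map (act g) ≪ μ ∧ μ ≪ μ.map (act g))
    (Ψ : G → X → (H ≃ₗᵢ[ℝ] H)) (ρ : G → X → H)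
    (hΨ_meas : ∀ g v, Measurable fun x => Ψ g x v)
    (hρ_meas : ∀ g, Measurable fun x => ρ g x)
    (hΨ_coc : ∀ g h, ∀ᵐ x ∂μ, ∀ v, Ψ (g * h) x v = Ψ g (act h x) (Ψ h x v))
    (hρ_coc : ∀ g h, ∀ᵐ x ∂μ, ρ (g * h) x = ρ g (act h x) + Ψ g (act h x) (ρ h x))
    (φ₀ : X → H) (hφ₀_meas : Measurable φ₀)
    (C : ℝ)
    (hbounded : ∀ g, ∀ᵐ x ∂μ, ‖Ψ g x (φ₀ x) + ρ g x‖ ≤ C) :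
    ∃ φ : X → H, Measurable φ ∧ (∃ C' : ℝ, ∀ᵐ x ∂μ, ‖φ x‖ ≤ C') ∧
      ∀ g, ∀ᵐ x ∂μ, φ (act g x) = Ψ g x (φ x) + ρ g x := by
  have hqmp : ∀ g, Measure.QuasiMeasurePreserving (act g) μ μ := fun g =>
    ⟨hact_meas g, (hquasi g).1⟩
  set orbit : G → X → H := fun g => affineAction act Ψ ρ g φ₀
  have horbit_bdd : ∀ᵐ x ∂μ, ∀ g, ‖orbit g x‖ ≤ C :=
    ae_all_iff.2 fun g => (hqmp g⁻¹).ae (hbounded g)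
  refine ⟨fun x => chebyshevCenter fun g => orbit g x,
    measurable_chebyshevCenter (measurable_affineAction hact_meas hΨ_meas hρ_meas hφ₀_meas),
    ⟨2 * C, horbit_bdd.mono fun x => norm_chebyshevCenter_le⟩, fun h => ?_⟩
  have horbit_mul : ∀ᵐ x ∂μ, ∀ g, orbit (h * g) (act h x) = Ψ h x (orbit g x) + ρ h x :=
    ae_all_iff.2 fun g => ae_affineAction_mul_apply hact_one hact_mul (hqmp g⁻¹)
      (hΨ_coc h g) (hρ_coc h g) φ₀
  filter_upwards [horbit_bdd, horbit_mul] with x hx hmul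
  refine chebyshevCenter_of_range_eq_image
    ((Ψ h x).toIsometryEquiv.trans (IsometryEquiv.addRight (ρ h x)))
    (isBounded_iff_forall_norm_le.2 ⟨C, forall_mem_range.2 hx⟩) ?_
  rw [← range_comp, ← (Equiv.mulLeft h).surjective.range_comp]
  exact congrArg range (funext hmul)

/-- **Theorem D**: an affine isometric action on essentially bounded measurable `H`-valued
functions, induced by measurable cocycles over a quasi-invariant action of a countable group,
with a bounded orbit, has a fixed point. -/
theorem bounded_orbit_on_Linfty_has_fixed_point
    {X : Type*} [MeasurableSpace X] (μ : Measure X) [IsProbabilityMeasure μ]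
    {G : Type*} [Group G] [Countable G]
    {H : Type*} [NormedAddCommGroup H] [InnerProductSpace ℝ H] [CompleteSpace H]
    [TopologicalSpace.SeparableSpace H] [MeasurableSpace H] [BorelSpace H]
    (act : G → X → X)
    (hact_one : ∀ x, act 1 x = x)
    (hact_mul : ∀ g h x, act (g * h) x = act g (act h x))
    (hact_meas : ∀ g, Measurable (act g))
    (hquasi : ∀ g, μ.map (act g) ≪ μ ∧ μ ≪ μ.map (act g))
    (Ψ : G → X → (H ≃ₗᵢ[ℝ] H)) (ρ : G → X → H)
    (hΨ_meas : ∀ g v, Measurable fun x => Ψ g x v)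
    (hρ_meas : ∀ g, Measurable fun x => ρ g x)
    (hρ_bdd : ∀ g, ∃ Cg : ℝ, ∀ᵐ x ∂μ, ‖ρ g x‖ ≤ Cg)
    (hΨ_coc : ∀ g h, ∀ᵐ x ∂μ, ∀ v, Ψ (g * h) x v = Ψ g (act h x) (Ψ h x v))
    (hρ_coc : ∀ g h, ∀ᵐ x ∂μ, ρ (g * h) x = ρ g (act h x) + Ψ g (act h x) (ρ h x))
    (φ₀ : X → H) (hφ₀_meas : Measurable φ₀)
    (hφ₀_bdd : ∃ C₀ : ℝ, ∀ᵐ x ∂μ, ‖φ₀ x‖ ≤ C₀)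
    (C : ℝ) (hC : 0 ≤ C)
    (hbounded : ∀ g, ∀ᵐ x ∂μ, ‖Ψ g x (φ₀ x) + ρ g x‖ ≤ C) :
    ∃ φ : X → H, Measurable φ ∧ (∃ C' : ℝ, ∀ᵐ x ∂μ, ‖φ x‖ ≤ C') ∧
      ∀ g, ∀ᵐ x ∂μ, φ (act g x) = Ψ g x (φ x) + ρ g x :=
  bounded_orbit_on_Linfty_has_fixed_point_general μ act hact_one hact_mul hact_meas hquasi Ψ ρ
    hΨ_meas hρ_meas hΨ_coc hρ_coc φ₀ hφ₀_meas C hbounded
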